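/- Let ρ = ρ(x) = (1/2)(I + x·σ) be a qubit state with Bloch vector x ∈ ℝ³ and define the n-fold tangent vectors Dᵢ(x) = Σ_{ℓ=1}^{n} ρ^{⊗(ℓ-1)} ⊗ (σᵢ/2) ⊗ ρ^{⊗(n-ℓ)}. Then Tr(Dᵢ(x) Dⱼ(x)) = (n/2ⁿ)(1+‖x‖²)^{n-1} δᵢⱼ + (n(n-1)/2ⁿ)(1+‖x‖²)^{n-2} xᵢ xⱼ. -/

import Mathlib

/-!
The Kronecker product of matrices is multiplicative and its trace is the product of the traces,
so `Tr(Dᵢ Dⱼ)` is a double sum over slots `ℓ, ℓ'` of products of `2 × 2` traces. The `n` diagonal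
terms each give `Tr(σᵢσⱼ/4) Tr(ρ²)^(n-1)` and the `n(n-1)` off-diagonal ones each give
`Tr(σᵢρ/2) Tr(ρσⱼ/2) Tr(ρ²)^(n-2)`; the values `Tr(σᵢσⱼ) = 2δᵢⱼ`, `Tr(ρσᵢ) = xᵢ` and
`Tr(ρ²) = (1 + ‖x‖²)/2` follow by linearity from `ρ = (1 + Σₖ xₖσₖ)/2`.
-/

open Matrix

noncomputable def pauli : Fin 3 → Matrix (Fin 2) (Fin 2) ℂ :=
  ![!![0, 1; 1, 0], !![0, -Complex.I; Complex.I, 0], !![1, 0; 0, -1]]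

noncomputable def blochRho (x : EuclideanSpace ℝ (Fin 3)) : Matrix (Fin 2) (Fin 2) ℂ :=
  (1 / 2 : ℂ) • (1 + (x 0 : ℂ) • pauli 0 + (x 1 : ℂ) • pauli 1 + (x 2 : ℂ) • pauli 2)

/-- The `n`-fold tangent vector `Dᵢ(x) = Σ_ℓ ρ^{⊗(ℓ-1)} ⊗ (σᵢ/2) ⊗ ρ^{⊗(n-ℓ)}`, written
entrywise: the `ℓ`-th summand is the tensor product with `σᵢ/2` in slot `ℓ` and `ρ(x)`
in every other slot. -/
noncomputable def tangentD (n : ℕ) (x : EuclideanSpace ℝ (Fin 3)) (i : Fin 3) :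
    Matrix (Fin n → Fin 2) (Fin n → Fin 2) ℂ :=
  ∑ ℓ : Fin n, Matrix.of fun a b =>
    ∏ k : Fin n,
      if k = ℓ then ((1 / 2 : ℂ) • pauli i) (a k) (b k) else blochRho x (a k) (b k)

namespace Matrix

section piKron

variable {ι m R : Type*} [Fintype ι] [DecidableEq ι] [Fintype m]

def piKron [CommSemiring R] (A : ι → Matrix m m R) : Matrix (ι → m) (ι → m) R :=
  of fun a b => ∏ k, A k (a k) (b k)

theorem piKron_mul_piKron [CommSemiring R] (A B : ι → Matrix m m R) :
    piKron A * piKron B = piKron (A * B) := by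
  ext a c
  simp only [piKron, mul_apply, of_apply, Pi.mul_apply, Fintype.prod_sum,
    ← Finset.prod_mul_distrib]

theorem trace_piKron [CommSemiring R] (A : ι → Matrix m m R) :
    (piKron A).trace = ∏ k, (A k).trace := by
  simp only [trace, diag, piKron, of_apply, Fintype.prod_sum]

variable [CommRing R] (ρ A B : Matrix m m R)

/-- The derivative of `t ↦ (ρ + t • A)^{⊗ι}` at `t = 0`. -/
def kronPowDeriv (ι : Type*) [Fintype ι] [DecidableEq ι] : Matrix (ι → m) (ι → m) R :=
  ∑ ℓ : ι, piKron (Function.update (fun _ => ρ) ℓ A)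

theorem trace_piKron_update_mul_piKron_update_self (ℓ : ι) :
    (piKron (Function.update (fun _ => ρ) ℓ A) *
        piKron (Function.update (fun _ => ρ) ℓ B)).trace =
      (A * B).trace * (ρ * ρ).trace ^ (Fintype.card ι - 1) := by
  rw [piKron_mul_piKron, trace_piKron, Fintype.prod_eq_mul_prod_compl ℓ]
  have hρ : ∀ k ∈ ({ℓ}ᶜ : Finset ι),
      (Function.update (fun _ => ρ) ℓ A * Function.update (fun _ => ρ) ℓ B) k = ρ * ρ := by
    intro k hk
    rw [Finset.mem_compl, Finset.mem_singleton] at hk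
    simp [Function.update_of_ne hk]
  rw [Finset.prod_congr rfl fun k hk => congrArg trace (hρ k hk), Finset.prod_const,
    Finset.card_compl, Finset.card_singleton]
  simp

theorem trace_piKron_update_mul_piKron_update_of_ne {ℓ ℓ' : ι} (h : ℓ ≠ ℓ') :
    (piKron (Function.update (fun _ => ρ) ℓ A) *
        piKron (Function.update (fun _ => ρ) ℓ' B)).trace =
      (A * ρ).trace * (ρ * B).trace * (ρ * ρ).trace ^ (Fintype.card ι - 2) := by
  rw [piKron_mul_piKron, trace_piKron, ← Finset.prod_mul_prod_compl {ℓ, ℓ'}, Finset.prod_pair h]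
  have hρ : ∀ k ∈ ({ℓ, ℓ'}ᶜ : Finset ι),
      (Function.update (fun _ => ρ) ℓ A * Function.update (fun _ => ρ) ℓ' B) k = ρ * ρ := by
    intro k hk
    simp only [Finset.mem_compl, Finset.mem_insert, Finset.mem_singleton, not_or] at hk
    simp [Function.update_of_ne hk.1, Function.update_of_ne hk.2]
  rw [Finset.prod_congr rfl fun k hk => congrArg trace (hρ k hk), Finset.prod_const,
    Finset.card_compl, Finset.card_pair h]
  simp [Function.update_of_ne h, Function.update_of_ne h.symm]

theorem trace_kronPowDeriv_mul_kronPowDeriv :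
    (kronPowDeriv ρ A ι * kronPowDeriv ρ B ι).trace =
      Fintype.card ι * (A * B).trace * (ρ * ρ).trace ^ (Fintype.card ι - 1) +
        Fintype.card ι * (Fintype.card ι - 1) * (A * ρ).trace * (ρ * B).trace *
          (ρ * ρ).trace ^ (Fintype.card ι - 2) := by
  have hrow : ∀ ℓ : ι, ∑ ℓ', (piKron (Function.update (fun _ => ρ) ℓ A) *
        piKron (Function.update (fun _ => ρ) ℓ' B)).trace =
      (A * B).trace * (ρ * ρ).trace ^ (Fintype.card ι - 1) +
        (Fintype.card ι - 1) *
          ((A * ρ).trace * (ρ * B).trace * (ρ * ρ).trace ^ (Fintype.card ι - 2)) := by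
    intro ℓ
    rw [Fintype.sum_eq_add_sum_compl ℓ, trace_piKron_update_mul_piKron_update_self,
      Finset.sum_congr rfl fun ℓ' hℓ' => trace_piKron_update_mul_piKron_update_of_ne ρ A B
        (fun h => by simp [h] at hℓ'),
      Finset.sum_const, Finset.card_compl, Finset.card_singleton, nsmul_eq_mul,
      Nat.cast_pred (Fintype.card_pos_iff.mpr ⟨ℓ⟩)]
  simp only [kronPowDeriv, Finset.sum_mul_sum, trace_sum, hrow, Finset.sum_const,
    Finset.card_univ, nsmul_eq_mul]
  ring

end piKron

end Matrix

theorem trace_pauli (i : Fin 3) : (pauli i).trace = 0 := by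
  fin_cases i <;> simp [pauli, trace, Fin.sum_univ_two]

theorem trace_pauli_mul_pauli (i j : Fin 3) :
    (pauli i * pauli j).trace = if i = j then 2 else 0 := by
  fin_cases i <;> fin_cases j <;> norm_num [pauli, trace, Fin.sum_univ_two]

theorem blochRho_eq_smul_sum (x : EuclideanSpace ℝ (Fin 3)) :
    blochRho x = (1 / 2 : ℂ) • (1 + ∑ k, (x k : ℂ) • pauli k) := by
  simp only [blochRho, Fin.sum_univ_three, add_assoc]

theorem trace_blochRho (x : EuclideanSpace ℝ (Fin 3)) : (blochRho x).trace = 1 := by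
  simp [blochRho_eq_smul_sum, trace_add, trace_sum, trace_smul, trace_pauli]

theorem trace_pauli_mul_blochRho (x : EuclideanSpace ℝ (Fin 3)) (i : Fin 3) :
    (pauli i * blochRho x).trace = x i := by
  simp only [blochRho_eq_smul_sum, mul_smul_comm, mul_add, mul_one, Finset.mul_sum, trace_smul,
    trace_add, trace_sum, trace_pauli, trace_pauli_mul_pauli, smul_eq_mul, mul_ite, mul_zero,
    Finset.sum_ite_eq, Finset.mem_univ, if_true]
  ring

theorem trace_blochRho_mul_pauli (x : EuclideanSpace ℝ (Fin 3)) (i : Fin 3) :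
    (blochRho x * pauli i).trace = x i := by
  rw [trace_mul_comm, trace_pauli_mul_blochRho]

theorem trace_blochRho_mul_self (x : EuclideanSpace ℝ (Fin 3)) :
    (blochRho x * blochRho x).trace = ((1 + ‖x‖ ^ 2 : ℝ) : ℂ) / 2 := by
  nth_rewrite 1 [blochRho_eq_smul_sum x]
  simp only [smul_mul, add_mul, one_mul, Finset.sum_mul, trace_smul, trace_add, trace_sum,
    trace_blochRho, trace_pauli_mul_blochRho, EuclideanSpace.real_norm_sq_eq, smul_eq_mul]
  push_cast [sq]
  ring

theorem tangentD_eq_kronPowDeriv (n : ℕ) (x : EuclideanSpace ℝ (Fin 3)) (i : Fin 3) :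
    tangentD n x i = kronPowDeriv (blochRho x) ((1 / 2 : ℂ) • pauli i) (Fin n) := by
  unfold tangentD kronPowDeriv piKron
  congr! with ℓ a b k
  rw [Function.update_apply]
  split_ifs <;> rfl

theorem tangentD_metric_general (n : ℕ) (x : EuclideanSpace ℝ (Fin 3)) (i j : Fin 3) :
    (tangentD n x i * tangentD n x j).trace =
      ((n : ℂ) / 2 ^ n) * (((1 + ‖x‖ ^ 2 : ℝ)) : ℂ) ^ (n - 1) * (if i = j then 1 else 0) +
        ((n : ℂ) * ((n : ℂ) - 1) / 2 ^ n) * (((1 + ‖x‖ ^ 2 : ℝ)) : ℂ) ^ (n - 2) *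
          (x i : ℂ) * (x j : ℂ) := by
  simp only [tangentD_eq_kronPowDeriv, trace_kronPowDeriv_mul_kronPowDeriv, Fintype.card_fin,
    smul_mul, mul_smul_comm, trace_smul, smul_eq_mul, trace_pauli_mul_pauli,
    trace_pauli_mul_blochRho, trace_blochRho_mul_pauli, trace_blochRho_mul_self]
  rcases n with _ | _ | n
  · simp
  · split_ifs <;> norm_num
  · rw [show n + 2 - 1 = n + 1 by omega, show n + 2 - 2 = n by omega, div_pow, div_pow]
    split_ifs <;> field_simp <;> ring

theorem tangentD_metric (n : ℕ) (hn : 1 ≤ n) (x : EuclideanSpace ℝ (Fin 3)) (i j : Fin 3) :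
    (tangentD n x i * tangentD n x j).trace =
      ((n : ℂ) / 2 ^ n) * (((1 + ‖x‖ ^ 2 : ℝ)) : ℂ) ^ (n - 1) * (if i = j then 1 else 0) +
        ((n : ℂ) * ((n : ℂ) - 1) / 2 ^ n) * (((1 + ‖x‖ ^ 2 : ℝ)) : ℂ) ^ (n - 2) *
          (x i : ℂ) * (x j : ℂ) :=
  tangentD_metric_general n x i j
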